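/- arXiv:1812.07651 — 2 statements merged into one kernel-verified Lean document; each statement's English description precedes it below -/
import Mathlib

section
/- Let r_1, ..., r_n be real numbers linearly independent over the rationals, and define P_0 = {1}, P_j = P_{j-1} ∪ (r_j + P_{j-1}). Then every subset Q ⊆ P_n with |Q| = k satisfies |Q − Q| ≥ k^{log_2 3}. -/
/-!
Put `σ = log₄ 3`, so that `k ^ log₂ 3 = (k * k) ^ σ`. We prove `(|Q| |Q'|) ^ σ ≤ |Q - Q'|` for all
`Q, Q' ⊆ P m` by induction on `m`. Write `Q = Q₀ ∪ (r m + Q₁)` and `Q' = Q₀' ∪ (r m + Q₁')` with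
`Q₀, Q₁, Q₀', Q₁' ⊆ P m`. Then `Q - Q'` contains `(Q₀ - Q₀') ∪ (Q₁ - Q₁')`, `r m + (Q₁ - Q₀')` and
`(Q₀ - Q₁') - r m`, which lie in three distinct cosets of the `ℤ`-span of `r 0, …, r (m - 1)`.
The induction therefore closes by the inequality
`((a + b) (a' + b')) ^ σ ≤ max ((a a') ^ σ) ((b b') ^ σ) + (a' b) ^ σ + (a b') ^ σ`.

In the coordinates `A = a ^ σ`, the left side is `‖(A, B)‖ ‖(A', B')‖` for the `ℓ^(1/σ)` norm,
and the right side is linear in `(A', B')`. By the triangle inequality it suffices to check the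
two edge rays `(1, 0)` and `(B, A)` of the cone `B B' ≤ A A'`. There the inequality reads
`‖(A, B)‖ ≤ A + B` and `‖(A, B)‖² ≤ A² + A B + B²`. The second is
`(1 + t) ^ (2σ) ≤ 1 + t ^ σ + t ^ (2σ)` on `[0, 1]`. This is an equality at both ends
(as `4 ^ σ = 3`) and follows from a sign analysis of the derivative.
-/

open Real

noncomputable def σ : ℝ := logb 4 3

lemma σ_pos : 0 < σ := logb_pos (by norm_num) (by norm_num)

lemma σ_le_one : σ ≤ 1 := by
  rw [σ, logb_le_iff_le_rpow (by norm_num) (by norm_num), rpow_one]; norm_num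

lemma three_quarters_le_σ : 3 / 4 ≤ σ := by
  rw [σ, le_logb_iff_rpow_le (by norm_num) (by norm_num)]
  calc (4 : ℝ) ^ (3 / 4 : ℝ) = ((4 : ℝ) ^ (3 : ℝ)) ^ (4⁻¹ : ℝ) := by
        rw [← rpow_mul (by norm_num)]; norm_num
    _ ≤ ((3:ℝ) ^ (4:ℝ)) ^ (4⁻¹ : ℝ) := by gcongr; norm_num
    _ = 3 := by rw [← rpow_mul (by norm_num)]; norm_num

lemma two_rpow_two_mul_σ : (2:ℝ) ^ (2 * σ) = 3 := by
  rw [rpow_mul (by norm_num), σ]; norm_num [rpow_logb]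

lemma log_three_eq : log 3 = 2 * σ * log 2 := by
  rw [← two_rpow_two_mul_σ, log_rpow (by norm_num)]

lemma two_mul_σ : 2 * σ = logb 2 3 := by
  rw [logb, log_three_eq, mul_div_assoc, div_self (log_pos one_lt_two).ne', mul_one]

noncomputable def pNorm (p A B : ℝ) : ℝ := (A ^ p + B ^ p) ^ p⁻¹

section pNorm
variable {p A B : ℝ}

lemma pNorm_nonneg (p : ℝ) (hA : 0 ≤ A) (hB : 0 ≤ B) : 0 ≤ pNorm p A B := by
  unfold pNorm; positivity

lemma pNorm_comm (p A B : ℝ) : pNorm p A B = pNorm p B A := by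
  rw [pNorm, pNorm, add_comm]

lemma pNorm_zero_left (hp : p ≠ 0) (hB : 0 ≤ B) : pNorm p 0 B = B := by
  rw [pNorm, zero_rpow hp, zero_add, rpow_rpow_inv hB hp]

lemma pNorm_zero_right (hp : p ≠ 0) (hA : 0 ≤ A) : pNorm p A 0 = A := by
  rw [pNorm_comm, pNorm_zero_left hp hA]

lemma pNorm_mul {μ : ℝ} (hp : p ≠ 0) (hμ : 0 ≤ μ) (hA : 0 ≤ A) (hB : 0 ≤ B) :
    pNorm p (μ * A) (μ * B) = μ * pNorm p A B := by
  rw [pNorm, pNorm, mul_rpow hμ hA, mul_rpow hμ hB, ← mul_add,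
    mul_rpow (rpow_nonneg hμ _) (by positivity), rpow_rpow_inv hμ hp]

lemma pNorm_rpow_inv {a b : ℝ} (hp : p ≠ 0) (ha : 0 ≤ a) (hb : 0 ≤ b) :
    pNorm p (a ^ p⁻¹) (b ^ p⁻¹) = (a + b) ^ p⁻¹ := by
  rw [pNorm, rpow_inv_rpow ha hp, rpow_inv_rpow hb hp]

lemma pNorm_add_le (hp : 1 ≤ p) {A₂ B₂ : ℝ} (hA : 0 ≤ A) (hB : 0 ≤ B) (hA₂ : 0 ≤ A₂)
    (hB₂ : 0 ≤ B₂) : pNorm p (A + A₂) (B + B₂) ≤ pNorm p A B + pNorm p A₂ B₂ := by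
  have h := Real.Lp_add_le_of_nonneg Finset.univ (f := ![A, B]) (g := ![A₂, B₂]) hp
    (by simp [Fin.forall_fin_two, hA, hB]) (by simp [Fin.forall_fin_two, hA₂, hB₂])
  simpa [pNorm, Fin.sum_univ_two, one_div] using h

lemma pNorm_le_add (hp : 1 ≤ p) (hA : 0 ≤ A) (hB : 0 ≤ B) : pNorm p A B ≤ A + B := by
  have hp0 : p ≠ 0 := by positivity
  simpa [pNorm_zero_left hp0 hB, pNorm_zero_right hp0 hA] using
    pNorm_add_le hp hA le_rfl le_rfl hB

end pNorm

section Gap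

open Set

lemma monotoneOn_Icc_of_hasDerivAt {f f' : ℝ → ℝ} {a b : ℝ} (hf : ContinuousOn f (Icc a b))
    (hf' : ∀ x ∈ Ioo a b, HasDerivAt f (f' x) x) (h : ∀ x ∈ Ioo a b, 0 ≤ f' x) :
    MonotoneOn f (Icc a b) :=
  monotoneOn_of_hasDerivWithinAt_nonneg (convex_Icc a b) hf
    (by simpa only [interior_Icc] using fun x hx => (hf' x hx).hasDerivWithinAt)
    (by simpa only [interior_Icc] using h)

lemma antitoneOn_Icc_of_hasDerivAt {f f' : ℝ → ℝ} {a b : ℝ} (hf : ContinuousOn f (Icc a b))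
    (hf' : ∀ x ∈ Ioo a b, HasDerivAt f (f' x) x) (h : ∀ x ∈ Ioo a b, f' x ≤ 0) :
    AntitoneOn f (Icc a b) :=
  antitoneOn_of_hasDerivWithinAt_nonpos (convex_Icc a b) hf
    (by simpa only [interior_Icc] using fun x hx => (hf' x hx).hasDerivWithinAt)
    (by simpa only [interior_Icc] using h)

noncomputable def gap (t : ℝ) : ℝ := 1 + t ^ σ + t ^ (2 * σ) - (1 + t) ^ (2 * σ)

noncomputable def gapDerivLog (t : ℝ) : ℝ :=
  (σ - 1) * log t + log (1 + 2 * t ^ σ) - (2 * σ - 1) * log (1 + t)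

noncomputable def gapDerivLogNum (t : ℝ) : ℝ := σ - 1 - σ * t + (4 * σ - 2) * t ^ σ

lemma continuous_gap : Continuous gap := by
  have := σ_pos
  unfold gap
  fun_prop (disch := positivity)

lemma gap_zero : gap 0 = 0 := by
  simp [gap, zero_rpow σ_pos.ne', zero_rpow (by linarith [σ_pos] : 2 * σ ≠ 0)]

lemma gap_one : gap 1 = 0 := by
  norm_num [gap, one_add_one_eq_two, two_rpow_two_mul_σ]

lemma hasDerivAt_gap {t : ℝ} (ht : 0 < t) :
    HasDerivAt gap (σ * (t ^ (σ - 1) * (1 + 2 * t ^ σ) - 2 * (1 + t) ^ (2 * σ - 1))) t := by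
  have h1 := Real.hasDerivAt_rpow_const (x := t) (p := σ) (Or.inl ht.ne')
  have h2 := Real.hasDerivAt_rpow_const (x := t) (p := 2 * σ) (Or.inl ht.ne')
  have h3 := ((hasDerivAt_id t).const_add 1).rpow_const (p := 2 * σ) (Or.inl (by positivity))
  refine (((h1.const_add 1).add h2).sub h3).congr_deriv ?_
  rw [show 2 * σ - 1 = (σ - 1) + σ by ring, rpow_add ht]
  simp only [id]; ring

lemma log_gapDeriv_sub {t : ℝ} (ht : 0 < t) :
    log (t ^ (σ - 1) * (1 + 2 * t ^ σ)) - log (2 * (1 + t) ^ (2 * σ - 1)) =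
      gapDerivLog t - log 2 := by
  have : 0 < 1 + 2 * t ^ σ := by positivity
  rw [log_mul (by positivity) this.ne', log_mul two_ne_zero (by positivity), log_rpow ht,
    log_rpow (by positivity), gapDerivLog]
  ring

lemma hasDerivAt_gapDerivLog {t : ℝ} (ht : 0 < t) :
    HasDerivAt gapDerivLog (gapDerivLogNum t / (t * (1 + 2 * t ^ σ) * (1 + t))) t := by
  have hA : 0 < 1 + 2 * t ^ σ := by positivity
  have h1 := (hasDerivAt_log ht.ne').const_mul (σ - 1)
  have h2 := (((Real.hasDerivAt_rpow_const (x := t) (p := σ) (Or.inl ht.ne')).const_mul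
    2).const_add 1).log hA.ne'
  have h3 := (((hasDerivAt_id t).const_add 1).log (by positivity)).const_mul (2 * σ - 1)
  refine ((h1.add h2).sub h3).congr_deriv ?_
  rw [rpow_sub_one ht.ne', gapDerivLogNum]
  simp only [id]
  field_simp
  ring

lemma gapDerivLog_one : gapDerivLog 1 = log 2 := by
  norm_num [gapDerivLog, one_add_one_eq_two, log_three_eq]
  ring

lemma monotoneOn_gapDerivLogNum : MonotoneOn gapDerivLogNum (Icc 0 1) := by
  have hσ := three_quarters_le_σ
  refine monotoneOn_Icc_of_hasDerivAt (by unfold gapDerivLogNum; fun_prop (disch := positivity))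
    (fun x hx => ((((hasDerivAt_id x).const_mul σ).const_sub (σ - 1)).add
      ((Real.hasDerivAt_rpow_const (Or.inl hx.1.ne')).const_mul (4 * σ - 2)))) fun x hx => ?_
  have : 1 ≤ x ^ (σ - 1) :=
    one_le_rpow_of_pos_of_le_one_of_nonpos hx.1 hx.2.le (by linarith [σ_le_one])
  have hσ0 : 0 ≤ (4 * σ - 2) * σ := by nlinarith
  nlinarith [mul_le_mul_of_nonneg_left this hσ0]

lemma gapDeriv_factor_le_iff {x : ℝ} (hx : 0 < x) :
    x ^ (σ - 1) * (1 + 2 * x ^ σ) ≤ 2 * (1 + x) ^ (2 * σ - 1) ↔ gapDerivLog x ≤ log 2 := by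
  rw [← log_le_log_iff (by positivity) (by positivity), ← sub_nonpos, log_gapDeriv_sub hx,
    sub_nonpos]

lemma le_gapDeriv_factor_iff {x : ℝ} (hx : 0 < x) :
    2 * (1 + x) ^ (2 * σ - 1) ≤ x ^ (σ - 1) * (1 + 2 * x ^ σ) ↔ log 2 ≤ gapDerivLog x := by
  rw [← log_le_log_iff (by positivity) (by positivity), ← sub_nonneg, log_gapDeriv_sub hx,
    sub_nonneg]

lemma gapDerivLog_le_max {y t z : ℝ} (hy : 0 < y) (hyt : y ≤ t) (htz : t ≤ z) (hz : z ≤ 1) :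
    gapDerivLog t ≤ max (gapDerivLog y) (gapDerivLog z) := by
  have hcont : ∀ a b, 0 < a → ContinuousOn gapDerivLog (Icc a b) := fun a b ha x hx =>
    (hasDerivAt_gapDerivLog (ha.trans_le hx.1)).continuousAt.continuousWithinAt
  have hmem : ∀ x, y ≤ x → x ≤ z → x ∈ Icc (0 : ℝ) 1 := fun x hx hx' =>
    ⟨hy.le.trans hx, hx'.trans hz⟩
  have hden : ∀ x : ℝ, 0 < x → 0 < x * (1 + 2 * x ^ σ) * (1 + x) := fun x hx => by positivity
  rcases le_or_gt (gapDerivLogNum t) 0 with hneg | hpos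
  · refine le_max_of_le_left (antitoneOn_Icc_of_hasDerivAt (hcont y t hy)
      (fun x hx => hasDerivAt_gapDerivLog (hy.trans hx.1)) (fun x hx => ?_)
      ⟨le_rfl, hyt⟩ ⟨hyt, le_rfl⟩ hyt)
    have hφ := monotoneOn_gapDerivLogNum (hmem x hx.1.le (hx.2.le.trans htz)) (hmem t hyt htz)
      hx.2.le
    exact div_nonpos_of_nonpos_of_nonneg (hφ.trans hneg) (hden x (hy.trans hx.1)).le
  · refine le_max_of_le_right (monotoneOn_Icc_of_hasDerivAt (hcont t z (hy.trans_le hyt))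
      (fun x hx => hasDerivAt_gapDerivLog ((hy.trans_le hyt).trans hx.1)) (fun x hx => ?_)
      ⟨le_rfl, htz⟩ ⟨htz, le_rfl⟩ htz)
    have hφ := monotoneOn_gapDerivLogNum (hmem t hyt htz) (hmem x (hyt.trans hx.1.le) hx.2.le)
      hx.1.le
    exact div_nonneg (hpos.le.trans hφ) (hden x ((hy.trans_le hyt).trans hx.1)).le

-- `gapDerivLog` is quasiconvex with `gapDerivLog 1 = log 2`, so the sign of `gap'`, which is
-- that of `gapDerivLog - log 2`, changes at most once on `(0, 1)`, from `+` to `-`.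
lemma gap_nonneg {t : ℝ} (ht0 : 0 ≤ t) (ht1 : t ≤ 1) : 0 ≤ gap t := by
  rcases ht0.eq_or_lt with rfl | ht0
  · rw [gap_zero]
  have hσ := σ_pos
  rcases le_or_gt (gapDerivLog t) (log 2) with hle | hlt
  · rw [← gap_one]
    refine antitoneOn_Icc_of_hasDerivAt continuous_gap.continuousOn
      (fun x hx => hasDerivAt_gap (ht0.trans hx.1)) (fun x hx => ?_)
      ⟨le_rfl, ht1⟩ ⟨ht1, le_rfl⟩ ht1
    have hL := gapDerivLog_le_max ht0 hx.1.le hx.2.le le_rfl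
    rw [gapDerivLog_one, max_eq_right hle] at hL
    exact mul_nonpos_of_nonneg_of_nonpos hσ.le
      (sub_nonpos.2 ((gapDeriv_factor_le_iff (ht0.trans hx.1)).2 hL))
  · rw [← gap_zero]
    refine monotoneOn_Icc_of_hasDerivAt continuous_gap.continuousOn
      (fun x hx => hasDerivAt_gap hx.1) (fun x hx => ?_)
      ⟨le_rfl, ht0.le⟩ ⟨ht0.le, le_rfl⟩ ht0.le
    have hL := gapDerivLog_le_max hx.1 hx.2.le ht1 le_rfl
    rw [gapDerivLog_one] at hL
    exact mul_nonneg hσ.le (sub_nonneg.2 ((le_gapDeriv_factor_iff hx.1).2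
      (hlt.le.trans ((le_max_iff.1 hL).resolve_right hlt.not_ge))))

end Gap

lemma pNorm_rpow_σ {a b : ℝ} (ha : 0 ≤ a) (hb : 0 ≤ b) :
    pNorm σ⁻¹ (a ^ σ) (b ^ σ) = (a + b) ^ σ := by
  simpa using pNorm_rpow_inv (inv_ne_zero σ_pos.ne') ha hb

lemma sq_pNorm_le {A B : ℝ} (hA : 0 ≤ A) (hB : 0 ≤ B) :
    pNorm σ⁻¹ A B ^ 2 ≤ A ^ 2 + A * B + B ^ 2 := by
  wlog hBA : B ≤ A generalizing A B
  · rw [pNorm_comm]; linarith [this hB hA (le_of_not_ge hBA)]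
  have hσ := σ_pos
  set t := (B / A) ^ σ⁻¹
  have hu : B / A = t ^ σ := by
    rw [← rpow_mul (by positivity), inv_mul_cancel₀ hσ.ne', rpow_one]
  rcases hA.eq_or_lt with rfl | hA0
  · rw [pNorm_zero_left (inv_ne_zero hσ.ne') hB]; nlinarith
  have hN : pNorm σ⁻¹ A B = A * (1 + t) ^ σ := by
    rw [← pNorm_rpow_σ zero_le_one (by positivity), one_rpow, ← hu, ← pNorm_mul
      (inv_ne_zero hσ.ne') hA zero_le_one (by positivity), mul_one, mul_div_cancel₀ _ hA0.ne']
  have hG := gap_nonneg (t := t) (by positivity)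
    (rpow_le_one (by positivity) ((div_le_one hA0).2 hBA) (by positivity))
  rw [gap, show 2 * σ = σ * (2 : ℕ) by ring, rpow_mul_natCast (by positivity),
    rpow_mul_natCast (by positivity), ← hu, sub_nonneg] at hG
  calc pNorm σ⁻¹ A B ^ 2 = A ^ 2 * ((1 + t) ^ σ) ^ 2 := by rw [hN]; ring
    _ ≤ A ^ 2 * (1 + B / A + (B / A) ^ 2) := by gcongr
    _ = A ^ 2 + A * B + B ^ 2 := by field_simp

lemma pNorm_mul_pNorm_le {A B A' B' : ℝ} (hA : 0 ≤ A) (hB : 0 ≤ B) (hA' : 0 ≤ A')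
    (hB' : 0 ≤ B') (h : B * B' ≤ A * A') :
    pNorm σ⁻¹ A B * pNorm σ⁻¹ A' B' ≤ A * A' + A' * B + A * B' := by
  have hp : 1 ≤ σ⁻¹ := one_le_inv₀ σ_pos |>.2 σ_le_one
  have hp0 : σ⁻¹ ≠ 0 := by positivity
  rcases hA.eq_or_lt with rfl | hA0
  · rcases mul_eq_zero.1 (le_antisymm (by simpa using h) (mul_nonneg hB hB')) with rfl | rfl
    · simp [pNorm_zero_left hp0 le_rfl]
    · simp [pNorm_zero_left hp0 hB, pNorm_zero_right hp0 hA', mul_comm]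
  set N := pNorm σ⁻¹ A B
  have hN0 : 0 ≤ N := pNorm_nonneg _ hA hB
  -- `(A A', A B') = (A A' - B B', 0) + B' (B, A)`, a decomposition along the two edges of the cone
  have hsplit : A * pNorm σ⁻¹ A' B' ≤ (A * A' - B * B') + B' * N := calc
    A * pNorm σ⁻¹ A' B' = pNorm σ⁻¹ ((A * A' - B * B') + B' * B) (0 + B' * A) := by
      rw [← pNorm_mul hp0 hA hA' hB']; ring_nf
    _ ≤ pNorm σ⁻¹ (A * A' - B * B') 0 + pNorm σ⁻¹ (B' * B) (B' * A) :=
      pNorm_add_le hp (sub_nonneg.2 h) le_rfl (by positivity) (by positivity)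
    _ = (A * A' - B * B') + B' * N := by
      rw [pNorm_zero_right hp0 (sub_nonneg.2 h), pNorm_mul hp0 hB' hB hA, pNorm_comm]
  refine le_of_mul_le_mul_left ?_ hA0
  calc A * (N * pNorm σ⁻¹ A' B') = N * (A * pNorm σ⁻¹ A' B') := by ring
    _ ≤ N * ((A * A' - B * B') + B' * N) := mul_le_mul_of_nonneg_left hsplit hN0
    _ = N * (A * A' - B * B') + B' * N ^ 2 := by ring
    _ ≤ (A + B) * (A * A' - B * B') + B' * (A ^ 2 + A * B + B ^ 2) := by
      have := sub_nonneg.2 h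
      gcongr
      · exact pNorm_le_add hp hA hB
      · exact sq_pNorm_le hA hB
    _ = A * (A * A' + A' * B + A * B') := by ring

lemma rpow_mul_le_max_add_add {a b a' b' : ℝ} (ha : 0 ≤ a) (hb : 0 ≤ b) (ha' : 0 ≤ a')
    (hb' : 0 ≤ b') :
    ((a + b) * (a' + b')) ^ σ ≤
      max ((a * a') ^ σ) ((b * b') ^ σ) + (a' * b) ^ σ + (a * b') ^ σ := by
  wlog h : b * b' ≤ a * a' generalizing a b a' b'
  · calc ((a + b) * (a' + b')) ^ σ = ((b + a) * (b' + a')) ^ σ := by rw [add_comm b, add_comm b']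
      _ ≤ max ((b * b') ^ σ) ((a * a') ^ σ) + (b' * a) ^ σ + (b * a') ^ σ :=
        this hb ha hb' ha' (le_of_not_ge h)
      _ = _ := by rw [max_comm, mul_comm b' a, mul_comm b a', add_right_comm]
  have hσ := σ_pos
  calc ((a + b) * (a' + b')) ^ σ
      = pNorm σ⁻¹ (a ^ σ) (b ^ σ) * pNorm σ⁻¹ (a' ^ σ) (b' ^ σ) := by
        rw [pNorm_rpow_σ ha hb, pNorm_rpow_σ ha' hb', mul_rpow (by positivity) (by positivity)]
    _ ≤ a ^ σ * a' ^ σ + a' ^ σ * b ^ σ + a ^ σ * b' ^ σ := by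
        refine pNorm_mul_pNorm_le (by positivity) (by positivity) (by positivity) (by positivity) ?_
        rw [← mul_rpow hb hb', ← mul_rpow ha ha']
        exact rpow_le_rpow (by positivity) h hσ.le
    _ = (a * a') ^ σ + (a' * b) ^ σ + (a * b') ^ σ := by
        rw [mul_rpow ha ha', mul_rpow ha' hb, mul_rpow ha hb']
    _ ≤ _ := by gcongr; exact le_max_left _ _

open Finset Pointwise

section CubeDifferences

variable {G : Type*} [AddCommGroup G] [DecidableEq G]

lemma max_card_sub_add_card_sub_add_card_sub_le {H : AddSubgroup G} {e : G} (he : e ∉ H)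
    (he₂ : e + e ∉ H) {S A₀ A₁ B₀ B₁ : Finset G} (hS : ∀ x ∈ S, ∀ y ∈ S, x - y ∈ H)
    (hA₀ : A₀ ⊆ S) (hA₁ : A₁ ⊆ S) (hB₀ : B₀ ⊆ S) (hB₁ : B₁ ⊆ S) :
    max #(A₀ - B₀) #(A₁ - B₁) + #(A₁ - B₀) + #(A₀ - B₁) ≤
      #((A₀ ∪ A₁.image (e + ·)) - (B₀ ∪ B₁.image (e + ·))) := by
  have hH : ∀ {A B}, A ⊆ S → B ⊆ S → ∀ z ∈ A - B, z ∈ H := fun hA hB z hz => by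
    obtain ⟨a, ha, b, hb, rfl⟩ := mem_sub.1 hz
    exact hS a (hA ha) b (hB hb)
  set D := (A₀ ∪ A₁.image (e + ·)) - (B₀ ∪ B₁.image (e + ·))
  set X := (A₀ - B₀) ∪ (A₁ - B₁)
  set Y := (A₁ - B₀).image (e + ·)
  set Z := (A₀ - B₁).image (· - e)
  have hXD : X ⊆ D := by
    refine union_subset (sub_subset_sub subset_union_left subset_union_left) fun z hz => ?_
    obtain ⟨a, ha, b, hb, rfl⟩ := mem_sub.1 hz
    exact mem_sub.2 ⟨e + a, subset_union_right (mem_image_of_mem _ ha), e + b,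
      subset_union_right (mem_image_of_mem _ hb), add_sub_add_left_eq_sub a b e⟩
  have hYD : Y ⊆ D := by
    refine image_subset_iff.2 fun z hz => ?_
    obtain ⟨a, ha, b, hb, rfl⟩ := mem_sub.1 hz
    exact mem_sub.2 ⟨e + a, subset_union_right (mem_image_of_mem _ ha), b, subset_union_left hb,
      add_sub_assoc e a b⟩
  have hZD : Z ⊆ D := by
    refine image_subset_iff.2 fun z hz => ?_
    obtain ⟨a, ha, b, hb, rfl⟩ := mem_sub.1 hz
    exact mem_sub.2 ⟨a, subset_union_left ha, e + b, subset_union_right (mem_image_of_mem _ hb),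
      by abel⟩
  have hXH : ∀ z ∈ X, z ∈ H := fun z hz =>
    (mem_union.1 hz).elim (hH hA₀ hB₀ z) (hH hA₁ hB₁ z)
  have hXY : Disjoint X Y := disjoint_left.2 fun z hzX hzY => by
    obtain ⟨w, hw, rfl⟩ := mem_image.1 hzY
    exact he (by simpa using H.sub_mem (hXH _ hzX) (hH hA₁ hB₀ w hw))
  have hXZ : Disjoint X Z := disjoint_left.2 fun z hzX hzZ => by
    obtain ⟨w, hw, rfl⟩ := mem_image.1 hzZ
    exact he (by simpa using H.sub_mem (hH hA₀ hB₁ w hw) (hXH _ hzX))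
  have hYZ : Disjoint Y Z := disjoint_left.2 fun z hzY hzZ => by
    obtain ⟨w, hw, rfl⟩ := mem_image.1 hzY
    obtain ⟨w', hw', hww'⟩ := mem_image.1 hzZ
    refine he₂ ?_
    convert H.sub_mem (hH hA₀ hB₁ w' hw') (hH hA₁ hB₀ w hw) using 1
    rw [eq_sub_iff_add_eq, sub_eq_iff_eq_add.1 hww']; abel
  calc max #(A₀ - B₀) #(A₁ - B₁) + #(A₁ - B₀) + #(A₀ - B₁) ≤ #X + #Y + #Z := by
        rw [card_image_of_injective _ (add_right_injective e),
          card_image_of_injective _ (sub_left_injective (b := e))]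
        gcongr
        exact max_le (card_le_card subset_union_left) (card_le_card subset_union_right)
    _ = #(X ∪ Y ∪ Z) := by
        rw [card_union_of_disjoint (disjoint_union_left.2 ⟨hXZ, hYZ⟩),
          card_union_of_disjoint hXY]
    _ ≤ #D := card_le_card (union_subset (union_subset hXD hYD) hZD)

lemma exists_eq_union_image_add {S Q : Finset G} {e : G} (hQ : Q ⊆ S ∪ S.image (e + ·)) :
    ∃ Q₀ ⊆ S, ∃ Q₁ ⊆ S, Q = Q₀ ∪ Q₁.image (e + ·) := by
  refine ⟨Q ∩ S, inter_subset_right, (Q \ S).image (· - e),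
    image_subset_iff.2 fun x hx => ?_, ?_⟩
  · obtain ⟨y, hy, rfl⟩ := mem_image.1 ((mem_union.1 (hQ (mem_sdiff.1 hx).1)).resolve_left
      (mem_sdiff.1 hx).2)
    simpa using hy
  · rw [image_image]
    simp only [Function.comp_def, add_sub_cancel, image_id']
    rw [union_comm, sdiff_union_inter]

def DiffBound (S : Finset G) : Prop :=
  ∀ A ⊆ S, ∀ B ⊆ S, ((#A : ℝ) * #B) ^ σ ≤ #(A - B)

lemma diffBound_singleton (x : G) : DiffBound {x} := by
  intro A hA B hB
  rcases A.eq_empty_or_nonempty with rfl | hA₀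
  · simp [zero_rpow σ_pos.ne']
  rcases B.eq_empty_or_nonempty with rfl | hB₀
  · simp [zero_rpow σ_pos.ne']
  have h1 : ∀ {C : Finset G}, C ⊆ {x} → (#C : ℝ) ≤ 1 := fun hC => by
    exact_mod_cast (card_le_card hC).trans (card_singleton x).le
  calc ((#A : ℝ) * #B) ^ σ ≤ 1 :=
        rpow_le_one (by positivity) (mul_le_one₀ (h1 hA) (by positivity) (h1 hB)) σ_pos.le
    _ ≤ #(A - B) := by exact_mod_cast (hA₀.sub hB₀).card_pos

lemma DiffBound.union_image_add {H : AddSubgroup G} {e : G} (he : e ∉ H) (he₂ : e + e ∉ H)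
    {S : Finset G} (hS : ∀ x ∈ S, ∀ y ∈ S, x - y ∈ H) (hbound : DiffBound S) :
    DiffBound (S ∪ S.image (e + ·)) := by
  intro Q hQ Q' hQ'
  obtain ⟨Q₀, hQ₀, Q₁, hQ₁, rfl⟩ := exists_eq_union_image_add hQ
  obtain ⟨Q₀', hQ₀', Q₁', hQ₁', rfl⟩ := exists_eq_union_image_add hQ'
  have hcard : ∀ A B : Finset G, (#(A ∪ B.image (e + ·)) : ℝ) ≤ #A + #B := fun A B => by
    exact_mod_cast (card_union_le _ _).trans (Nat.add_le_add_left card_image_le _)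
  calc ((#(Q₀ ∪ Q₁.image (e + ·)) : ℝ) * #(Q₀' ∪ Q₁'.image (e + ·))) ^ σ
      ≤ ((#Q₀ + #Q₁) * (#Q₀' + #Q₁')) ^ σ :=
        rpow_le_rpow (by positivity) (mul_le_mul (hcard _ _) (hcard _ _) (by positivity)
          (by positivity)) σ_pos.le
    _ ≤ max (((#Q₀ : ℝ) * #Q₀') ^ σ) (((#Q₁ : ℝ) * #Q₁') ^ σ) + ((#Q₀' : ℝ) * #Q₁) ^ σ
        + ((#Q₀ : ℝ) * #Q₁') ^ σ := by
      apply rpow_mul_le_max_add_add <;> positivity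
    _ ≤ max (#(Q₀ - Q₀') : ℝ) #(Q₁ - Q₁') + #(Q₁ - Q₀') + #(Q₀ - Q₁') := by
      refine add_le_add (add_le_add
        (max_le_max (hbound _ hQ₀ _ hQ₀') (hbound _ hQ₁ _ hQ₁')) ?_) (hbound _ hQ₀ _ hQ₁')
      rw [mul_comm]; exact hbound _ hQ₁ _ hQ₀'
    _ ≤ _ := by
      exact_mod_cast max_card_sub_add_card_sub_add_card_sub_le he he₂ hS hQ₀ hQ₁ hQ₀' hQ₁'

end CubeDifferences

section GeneratedSets

open Submodule

variable {G : Type*} [AddCommGroup G] {n : ℕ} {r : Fin n → G}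

lemma zsmul_notMem_span_image_lt (hr : LinearIndependent ℤ r) (j : Fin n) {c : ℤ}
    (hc : c ≠ 0) : c • r j ∉ span ℤ (r '' {i | i.1 < j.1}) := by
  have hsub : {i : Fin n | i.1 < j.1} ⊆ Set.univ \ {j} := fun i hi =>
    ⟨Set.mem_univ i, Fin.ne_of_lt hi⟩
  exact fun h => hc (hr.eq_zero_of_smul_mem_span j c (span_mono (Set.image_mono hsub) h))

variable [DecidableEq G] {P : ℕ → Finset G}

lemma sub_mem_span_of_mem {x₀ : G} (hP0 : P 0 = {x₀})
    (hPstep : ∀ j : Fin n, P (j.1 + 1) = P j.1 ∪ (P j.1).image (fun a => r j + a)) :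
    ∀ m ≤ n, ∀ x ∈ P m, x - x₀ ∈ span ℤ (r '' {i | i.1 < m}) := by
  intro m
  induction m with
  | zero =>
    intro _ x hx
    rw [hP0, mem_singleton] at hx
    simp [hx]
  | succ m ih =>
    intro hm x hx
    have hmono : span ℤ (r '' {i | i.1 < m}) ≤ span ℤ (r '' {i | i.1 < m + 1}) :=
      span_mono (Set.image_mono fun i (hi : i.1 < m) => Nat.lt_succ_of_lt hi)
    rw [show m + 1 = (⟨m, hm⟩ : Fin n).1 + 1 from rfl, hPstep, mem_union] at hx
    rcases hx with hx | hx
    · exact hmono (ih (Nat.le_of_succ_le hm) x hx)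
    · obtain ⟨y, hy, rfl⟩ := mem_image.1 hx
      rw [add_sub_assoc]
      exact add_mem (subset_span ⟨⟨m, hm⟩, Nat.lt_succ_self m, rfl⟩)
        (hmono (ih (Nat.le_of_succ_le hm) y hy))

theorem diffBound_of_linearIndependent (hr : LinearIndependent ℤ r) {x₀ : G}
    (hP0 : P 0 = {x₀})
    (hPstep : ∀ j : Fin n, P (j.1 + 1) = P j.1 ∪ (P j.1).image (fun a => r j + a)) :
    ∀ m ≤ n, DiffBound (P m) := by
  intro m
  induction m with
  | zero => exact fun _ => hP0 ▸ diffBound_singleton x₀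
  | succ m ih =>
    intro hm
    set j : Fin n := ⟨m, hm⟩
    have hmn := Nat.le_of_succ_le hm
    rw [show m + 1 = j.1 + 1 from rfl, hPstep]
    refine (ih hmn).union_image_add (H := (span ℤ (r '' {i | i.1 < j.1})).toAddSubgroup)
      (by simpa using zsmul_notMem_span_image_lt hr j one_ne_zero)
      (by simpa [← two_zsmul] using zsmul_notMem_span_image_lt hr j two_ne_zero)
      fun x hx y hy => ?_
    simpa only [mem_toAddSubgroup, sub_sub_sub_cancel_right] using
      sub_mem (sub_mem_span_of_mem hP0 hPstep m hmn x hx)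
        (sub_mem_span_of_mem hP0 hPstep m hmn y hy)

end GeneratedSets

theorem stmt_10 (n : ℕ) (r : Fin n → ℝ)
    (hindep : ∀ x : Fin n → ℤ, (∑ i, (x i : ℝ) * r i) = 0 → x = 0)
    (P : ℕ → Finset ℝ) (hP0 : P 0 = {1})
    (hPstep : ∀ j : Fin n, P (j.1 + 1) = P j.1 ∪ (P j.1).image (fun a => r j + a))
    (k : ℕ) (Q : Finset ℝ) (hQ : Q ⊆ P n) (hk : Q.card = k) :
    ((Q - Q).card : ℝ) ≥ (k : ℝ) ^ Real.logb 2 3 := by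
  have hr : LinearIndependent ℤ r := Fintype.linearIndependent_iff.2 fun g hg =>
    congrFun (hindep g (by simpa [zsmul_eq_mul] using hg))
  have h := diffBound_of_linearIndependent hr hP0 hPstep n le_rfl Q hQ Q hQ
  rwa [hk, ← sq, ← rpow_natCast, ← rpow_mul (Nat.cast_nonneg k), Nat.cast_two, two_mul_σ] at h
end

section
/- Let p = log_4 3, and fix x > 0. Define f(x, γ) = x^p + x^{2p} + γ^p − (x+1)^p (x+γ)^p for γ > 0. Then there exists γ_0 = x·r/(1−r) > 0 with r = (1+x)^{p/(p-1)} ∈ (0,1), such that γ ↦ f(x, γ) is increasing on (0, γ_0) and decreasing on (γ_0, ∞). In particular, the minimum of f(x, ·) on (0, 1] is attained in the limit γ → 0 or at γ = 1. -/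
/-!
With `c = (1 + x) ^ p`, the derivative `p γ ^ (p - 1) - c p (x + γ) ^ (p - 1)` is positive exactly
when `(γ / (x + γ)) ^ (p - 1) > c`. Since `p - 1 < 0` this means
`γ / (x + γ) < c ^ (1 / (p - 1)) = r`, i.e. `γ < γ₀`. As `0 < p`, `f` is continuous at `γ = 0`,
so it increases on the closed interval `[0, γ₀]`, and the value "in the limit `γ → 0`" is `f 0`.
-/

open Set Real

lemma logb_four_three_pos : 0 < logb 4 3 := logb_pos (by norm_num) (by norm_num)

lemma logb_four_three_lt_one : logb 4 3 < 1 := by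
  rw [← logb_self_eq_one (b := 4) (by norm_num)]
  exact logb_lt_logb (by norm_num) (by norm_num) (by norm_num)

lemma min_le_of_monotoneOn_of_antitoneOn {F : ℝ → ℝ} {a m b γ : ℝ}
    (hmono : MonotoneOn F (Icc a m)) (hanti : AntitoneOn F (Ici m)) (hγ : γ ∈ Icc a b) :
    min (F a) (F b) ≤ F γ := by
  rcases le_or_gt γ m with hγm | hmγ
  · exact (min_le_left _ _).trans
      (hmono ⟨le_rfl, hγ.1.trans hγm⟩ ⟨hγ.1, hγm⟩ hγ.1)
  · exact (min_le_right _ _).trans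
      (hanti (mem_Ici.2 hmγ.le) (mem_Ici.2 (hmγ.le.trans hγ.2)) hγ.2)

lemma div_add_lt_iff_lt_mul_div_one_sub {x t r : ℝ} (hr : r < 1) (hxt : 0 < x + t) :
    t / (x + t) < r ↔ t < x * r / (1 - r) := by
  rw [div_lt_iff₀ hxt, lt_div_iff₀ (sub_pos.2 hr)]
  constructor <;> intro h <;> linarith

lemma lt_div_add_iff_mul_div_one_sub_lt {x t r : ℝ} (hr : r < 1) (hxt : 0 < x + t) :
    r < t / (x + t) ↔ x * r / (1 - r) < t := by
  rw [lt_div_iff₀ hxt, div_lt_iff₀ (sub_pos.2 hr)]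
  constructor <;> intro h <;> linarith

section Profile

variable {p x a : ℝ}

lemma rpow_div_sub_one_rpow_sub_one (ha : 0 ≤ a) (hp : p ≠ 1) :
    (a ^ (p / (p - 1))) ^ (p - 1) = a ^ p := by
  rw [← rpow_mul ha, div_mul_cancel₀ _ (sub_ne_zero.2 hp)]

lemma rpow_div_sub_one_lt_one (hp0 : 0 < p) (hp1 : p < 1) (ha : 1 < a) :
    a ^ (p / (p - 1)) < 1 :=
  rpow_lt_one_of_one_lt_of_neg ha (div_neg_of_pos_of_neg hp0 (by linarith))

lemma mul_rpow_sub_one_lt_rpow_sub_one_iff (hp1 : p < 1) (ha : 0 < a) {t : ℝ} (ht : 0 < t)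
    (hxt : 0 < x + t) :
    a ^ p * (x + t) ^ (p - 1) < t ^ (p - 1) ↔ t / (x + t) < a ^ (p / (p - 1)) := by
  rw [← rpow_div_sub_one_rpow_sub_one ha.le hp1.ne, ← lt_div_iff₀ (rpow_pos_of_pos hxt _),
    ← div_rpow ht.le hxt.le,
    rpow_lt_rpow_iff_of_neg (by positivity) (by positivity) (by linarith)]

lemma rpow_sub_one_lt_mul_rpow_sub_one_iff (hp1 : p < 1) (ha : 0 < a) {t : ℝ} (ht : 0 < t)
    (hxt : 0 < x + t) :
    t ^ (p - 1) < a ^ p * (x + t) ^ (p - 1) ↔ a ^ (p / (p - 1)) < t / (x + t) := by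
  rw [← rpow_div_sub_one_rpow_sub_one ha.le hp1.ne, ← div_lt_iff₀ (rpow_pos_of_pos hxt _),
    ← div_rpow ht.le hxt.le,
    rpow_lt_rpow_iff_of_neg (by positivity) (by positivity) (by linarith)]

lemma hasDerivAt_const_add_rpow_sub_mul_rpow (K c : ℝ) {t : ℝ} (ht : t ≠ 0)
    (hxt : x + t ≠ 0) :
    HasDerivAt (fun γ => K + γ ^ p - c * (x + γ) ^ p)
      (p * t ^ (p - 1) - c * (p * (x + t) ^ (p - 1))) t := by
  have hshift : HasDerivAt (fun γ => (x + γ) ^ p) (p * (x + t) ^ (p - 1)) t := by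
    simpa using ((hasDerivAt_id t).const_add x).rpow_const (p := p) (Or.inl hxt)
  exact ((hasDerivAt_rpow_const (Or.inl ht)).const_add K).sub (hshift.const_mul c)

lemma continuous_const_add_rpow_sub_mul_rpow (hp0 : 0 ≤ p) (K c : ℝ) :
    Continuous (fun γ : ℝ => K + γ ^ p - c * (x + γ) ^ p) := by
  have hpow := continuous_rpow_const hp0
  exact (continuous_const.add hpow).sub (continuous_const.mul (hpow.comp (by fun_prop)))

lemma strictMonoOn_const_add_rpow_sub_mul_rpow (hp0 : 0 < p) (hp1 : p < 1) (hx : 0 < x)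
    (ha : 1 < a) (K : ℝ) :
    StrictMonoOn (fun γ => K + γ ^ p - a ^ p * (x + γ) ^ p)
      (Icc 0 (x * a ^ (p / (p - 1)) / (1 - a ^ (p / (p - 1))))) := by
  refine strictMonoOn_of_deriv_pos (convex_Icc _ _)
    (continuous_const_add_rpow_sub_mul_rpow hp0.le K _).continuousOn fun t ht => ?_
  rw [interior_Icc] at ht
  have hxt : 0 < x + t := by linarith [ht.1]
  rw [(hasDerivAt_const_add_rpow_sub_mul_rpow K _ ht.1.ne' hxt.ne').deriv]
  have hlt := (mul_rpow_sub_one_lt_rpow_sub_one_iff hp1 (by linarith) ht.1 hxt).2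
    ((div_add_lt_iff_lt_mul_div_one_sub (rpow_div_sub_one_lt_one hp0 hp1 ha) hxt).2 ht.2)
  nlinarith

lemma strictAntiOn_const_add_rpow_sub_mul_rpow (hp0 : 0 < p) (hp1 : p < 1) (hx : 0 < x)
    (ha : 1 < a) (K : ℝ) :
    StrictAntiOn (fun γ => K + γ ^ p - a ^ p * (x + γ) ^ p)
      (Ici (x * a ^ (p / (p - 1)) / (1 - a ^ (p / (p - 1))))) := by
  have hr1 := rpow_div_sub_one_lt_one hp0 hp1 ha
  refine strictAntiOn_of_deriv_neg (convex_Ici _)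
    (continuous_const_add_rpow_sub_mul_rpow hp0.le K _).continuousOn fun t ht => ?_
  rw [interior_Ici] at ht
  have ht0 : 0 < t := lt_trans (by have := sub_pos.2 hr1; positivity) ht
  have hxt : 0 < x + t := by linarith
  rw [(hasDerivAt_const_add_rpow_sub_mul_rpow K _ ht0.ne' hxt.ne').deriv]
  have hlt := (rpow_sub_one_lt_mul_rpow_sub_one_iff hp1 (by linarith) ht0 hxt).2
    ((lt_div_add_iff_mul_div_one_sub_lt hr1 hxt).2 ht)
  nlinarith

end Profile

theorem stmt_18 (p : ℝ) (hp : p = Real.logb 4 3) (x : ℝ) (hx : 0 < x)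
    (f : ℝ → ℝ) (hf : f = fun γ => x ^ p + x ^ (2 * p) + γ ^ p - (x + 1) ^ p * (x + γ) ^ p)
    (r : ℝ) (hr : r = (1 + x) ^ (p / (p - 1)))
    (γ₀ : ℝ) (hγ₀ : γ₀ = x * r / (1 - r)) :
    0 < r ∧ r < 1 ∧ 0 < γ₀ ∧
    StrictMonoOn f (Set.Ioo 0 γ₀) ∧ StrictAntiOn f (Set.Ioi γ₀) ∧
    ∀ γ ∈ Set.Ioc (0 : ℝ) 1,
      min (x ^ p + x ^ (2 * p) - (x + 1) ^ p * x ^ p) (f 1) ≤ f γ := by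
  have hp0 : 0 < p := hp ▸ logb_four_three_pos
  have hp1 : p < 1 := hp ▸ logb_four_three_lt_one
  have ha : 1 < 1 + x := by linarith
  have hr0 : 0 < r := hr ▸ rpow_pos_of_pos (by linarith) _
  have hr1 : r < 1 := hr ▸ rpow_div_sub_one_lt_one hp0 hp1 ha
  have hf' : f = fun γ => (x ^ p + x ^ (2 * p)) + γ ^ p - (1 + x) ^ p * (x + γ) ^ p := by
    rw [hf, add_comm x 1]
  have hmono := strictMonoOn_const_add_rpow_sub_mul_rpow hp0 hp1 hx ha (x ^ p + x ^ (2 * p))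
  have hanti := strictAntiOn_const_add_rpow_sub_mul_rpow hp0 hp1 hx ha (x ^ p + x ^ (2 * p))
  rw [← hr, ← hγ₀, ← hf'] at hmono hanti
  have hf0 : f 0 = x ^ p + x ^ (2 * p) - (x + 1) ^ p * x ^ p := by
    simp [hf, zero_rpow hp0.ne']
  have hγ₀0 : 0 < γ₀ := hγ₀ ▸ by have := sub_pos.2 hr1; positivity
  refine ⟨hr0, hr1, hγ₀0, hmono.mono Ioo_subset_Icc_self, hanti.mono Ioi_subset_Ici_self,
    fun γ hγ => ?_⟩
  rw [← hf0]
  exact min_le_of_monotoneOn_of_antitoneOn hmono.monotoneOn hanti.antitoneOn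
    (Ioc_subset_Icc_self hγ)
end
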